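/- Let K be a field, q ∈ K[x_1] nonconstant, R_q = K[x_1]/⟨q⟩, and let f, g, h ∈ R_q[x_2,...,x_n] be nonzero non-units with at most one of them lying in R_q, such that lcm(lm(f), lm(g)) ∈ ⟨lm(h)⟩. Then with λ := σ_q(l_h/d) where l_h = ι_q(lc(h)), d = gcd(lcm(l_f, l_g), l_h), l_f = ι_q(lc(f)), l_g = ι_q(lc(g)), one has the triangular identity λ·S(f,g) = (λ·c(g|f)/c(h|f))·S(f,h) − (λ·c(f|g)/c(h|g))·S(g,h), where for a pair (u,v) the cofactor c(v|u) := m_u·lcm(lm(u),lm(v))/lm(u) with m_u = σ_q(lcm(l_u,l_v)/l_u), and S(u,v) = c(v|u)·u − c(u|v)·v, the displayed quotients of terms being exact. -/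

import Mathlib

open MvPolynomial

/-- The leading monomial (exponent) of `f` with respect to the monomial order `m`,
taken over the coefficient ring. -/
noncomputable def mdeg {σ : Type*} (m : MonomialOrder σ) {R : Type*} [CommSemiring R]
    (f : MvPolynomial σ R) : σ →₀ ℕ :=
  m.toSyn.symm (f.support.sup fun d => m.toSyn d)

/-- The leading coefficient of `f` with respect to the monomial order `m`. -/
noncomputable def lC {σ : Type*} (m : MonomialOrder σ) {R : Type*} [CommSemiring R]
    (f : MvPolynomial σ R) : R :=
  f.coeff (mdeg m f)

/-- The leading term of `f` with respect to the monomial order `m`. -/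
noncomputable def lT {σ : Type*} (m : MonomialOrder σ) {R : Type*} [CommSemiring R]
    (f : MvPolynomial σ R) : MvPolynomial σ R :=
  monomial (mdeg m f) (lC m f)

/-- `d` is a greatest common divisor of `a` and `b` (gcd's are unique up to units). -/
def IsGcd {α : Type*} [CommMonoid α] (d a b : α) : Prop :=
  d ∣ a ∧ d ∣ b ∧ ∀ e, e ∣ a → e ∣ b → e ∣ d

/-- `l` is a least common multiple of `a` and `b` (lcm's are unique up to units). -/
def IsLcm {α : Type*} [CommMonoid α] (l a b : α) : Prop :=
  a ∣ l ∧ b ∣ l ∧ ∀ e, a ∣ e → b ∣ e → l ∣ e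

/-! The S-polynomial of `(f, g)` is `u·x^(γ-α)·f - v·x^(γ-β)·g` with `γ = lcm(x^α, x^β)` and
`u·l_f = v·l_g = lcm(l_f, l_g)`.  As `d ∣ lcm(l_f, l_g)`, `λ·lcm(l_f, l_g)` is a multiple of
`d·λ = l_h`, hence a common multiple of `l_f, l_h` and of `l_g, l_h`; this gives the multipliers
`w₁, w₂`.  Cancelling `l_f`, `l_g`, `l_h` in `λ·lcm(l_f, l_g) = w₁·lcm(l_f, l_h) = w₂·lcm(l_g, l_h)`
matches the coefficients of `f`, `g`, `h` on both sides, and the monomials match because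
`x^α, x^β, x^δ` divide the pairwise lcm's, which in turn divide `x^γ` when `x^δ ∣ x^γ`. -/

lemma lC_ne_zero {σ : Type*} (m : MonomialOrder σ) {R : Type*} [CommSemiring R]
    {f : MvPolynomial σ R} (hf : f ≠ 0) : lC m f ≠ 0 :=
  m.leadingCoeff_ne_zero_iff.mpr hf

section Divisibility

variable {α : Type*} [CommMonoidWithZero α]

lemma IsLcm.dvd_mul_of_dvd {M a c d lam N : α} (hM : IsLcm M a c) (ha : a ∣ N) (hd : d ∣ N)
    (hc : c = d * lam) : M ∣ lam * N :=
  hM.2.2 _ (dvd_mul_of_dvd_right ha lam)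
    (by rw [hc, mul_comm lam]; exact mul_dvd_mul_right hd lam)

lemma mul_eq_mul_of_eq_mul_cofactors [IsLeftCancelMulZero α] {a M M' u u' x y : α}
    (ha : a ≠ 0) (hM : M = a * u) (hM' : M' = a * u') (h : x * M = y * M') : x * u = y * u' := by
  rw [hM, hM', mul_left_comm, mul_left_comm y] at h
  exact mul_left_cancel₀ ha h

end Divisibility

section Monomials

variable {σ R : Type*} [CommRing R]

lemma C_mul_monomial_tsub_mul {α β γ : σ →₀ ℕ} (hαβ : α ≤ β) (hβγ : β ≤ γ) (a b : R) :
    C a * monomial (γ - β) 1 * (C b * monomial (β - α) 1) = C (a * b) * monomial (γ - α) 1 := by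
  rw [mul_mul_mul_comm, monomial_mul, tsub_add_tsub_cancel hβγ hαβ, mul_one, ← map_mul]

lemma triangle_combination {γ γ₁ γ₂ α β δ : σ →₀ ℕ} (hγ₁ : γ₁ ≤ γ) (hγ₂ : γ₂ ≤ γ)
    (hα : α ≤ γ₁) (hβ : β ≤ γ₂) (hδ₁ : δ ≤ γ₁) (hδ₂ : δ ≤ γ₂)
    {lam u v u₁ v₁ u₂ v₂ w₁ w₂ : R} (hf : lam * u = w₁ * u₁) (hg : lam * v = w₂ * u₂)
    (hh : w₁ * v₁ = w₂ * v₂) (f g h : MvPolynomial σ R) :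
    C lam * (C u * monomial (γ - α) 1 * f - C v * monomial (γ - β) 1 * g) =
      C w₁ * monomial (γ - γ₁) 1 *
          (C u₁ * monomial (γ₁ - α) 1 * f - C v₁ * monomial (γ₁ - δ) 1 * h) -
        C w₂ * monomial (γ - γ₂) 1 *
          (C u₂ * monomial (γ₂ - β) 1 * g - C v₂ * monomial (γ₂ - δ) 1 * h) := by
  have ef := C_mul_monomial_tsub_mul hα hγ₁ w₁ u₁
  have eh₁ := C_mul_monomial_tsub_mul hδ₁ hγ₁ w₁ v₁
  have eg := C_mul_monomial_tsub_mul hβ hγ₂ w₂ u₂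
  have eh₂ := C_mul_monomial_tsub_mul hδ₂ hγ₂ w₂ v₂
  rw [← hf] at ef
  rw [← hg] at eg
  rw [hh] at eh₁
  simp only [map_mul] at ef eg eh₁ eh₂
  linear_combination (-f) * ef + g * eg + h * eh₁ - h * eh₂

end Monomials

theorem triangular_identity_PQR_general {σ K : Type*} [Field K] (mo : MonomialOrder σ)
    (q : Polynomial K)
    (f g h : MvPolynomial σ (Polynomial K ⧸ Ideal.span {q}))
    (hf0 : f ≠ 0)
    (hg0 : g ≠ 0)
    (hh0 : h ≠ 0)
    (hdvd : mdeg mo h ≤ mdeg mo f ⊔ mdeg mo g)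
    (γfg γfh γgh : σ →₀ ℕ)
    (hγfg : γfg = mdeg mo f ⊔ mdeg mo g)
    (hγfh : γfh = mdeg mo f ⊔ mdeg mo h)
    (hγgh : γgh = mdeg mo g ⊔ mdeg mo h)
    (lf lg lh : Polynomial K)
    (hlf : lf.degree < q.degree ∧ Ideal.Quotient.mk (Ideal.span {q}) lf = lC mo f)
    (hlg : lg.degree < q.degree ∧ Ideal.Quotient.mk (Ideal.span {q}) lg = lC mo g)
    (hlh : lh.degree < q.degree ∧ Ideal.Quotient.mk (Ideal.span {q}) lh = lC mo h)
    (Mfg Mfh Mgh ufg vfg ufh vfh ugh vgh d lam : Polynomial K)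
    (hufg : Mfg = lf * ufg) (hvfg : Mfg = lg * vfg)
    (hMfh : IsLcm Mfh lf lh) (hufh : Mfh = lf * ufh) (hvfh : Mfh = lh * vfh)
    (hMgh : IsLcm Mgh lg lh) (hugh : Mgh = lg * ugh) (hvgh : Mgh = lh * vgh)
    (hd : IsGcd d Mfg lh) (hlam : lh = d * lam) :
    γfh ≤ γfg ∧ γgh ≤ γfg ∧
    ∃ w1 w2 : Polynomial K,
      lam * Mfg = w1 * Mfh ∧ lam * Mfg = w2 * Mgh ∧
      C (Ideal.Quotient.mk (Ideal.span {q}) lam) *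
          (C (Ideal.Quotient.mk (Ideal.span {q}) ufg) * monomial (γfg - mdeg mo f) 1 * f -
            C (Ideal.Quotient.mk (Ideal.span {q}) vfg) * monomial (γfg - mdeg mo g) 1 * g) =
        C (Ideal.Quotient.mk (Ideal.span {q}) w1) * monomial (γfg - γfh) 1 *
            (C (Ideal.Quotient.mk (Ideal.span {q}) ufh) * monomial (γfh - mdeg mo f) 1 * f -
              C (Ideal.Quotient.mk (Ideal.span {q}) vfh) * monomial (γfh - mdeg mo h) 1 * h) -
          C (Ideal.Quotient.mk (Ideal.span {q}) w2) * monomial (γfg - γgh) 1 *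
            (C (Ideal.Quotient.mk (Ideal.span {q}) ugh) * monomial (γgh - mdeg mo g) 1 * g -
              C (Ideal.Quotient.mk (Ideal.span {q}) vgh) * monomial (γgh - mdeg mo h) 1 * h) := by
  have lift_ne_zero {l : Polynomial K} {p : MvPolynomial σ (Polynomial K ⧸ Ideal.span {q})}
      (hp : p ≠ 0) (hl : Ideal.Quotient.mk _ l = lC mo p) : l ≠ 0 :=
    fun hl0 => lC_ne_zero mo hp (by rw [← hl, hl0, map_zero])
  subst hγfg hγfh hγgh
  have hfh : mdeg mo f ⊔ mdeg mo h ≤ mdeg mo f ⊔ mdeg mo g := sup_le le_sup_left hdvd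
  have hgh : mdeg mo g ⊔ mdeg mo h ≤ mdeg mo f ⊔ mdeg mo g := sup_le le_sup_right hdvd
  obtain ⟨w1, hw1⟩ := hMfh.dvd_mul_of_dvd ⟨ufg, hufg⟩ hd.1 hlam
  obtain ⟨w2, hw2⟩ := hMgh.dvd_mul_of_dvd ⟨vfg, hvfg⟩ hd.1 hlam
  rw [mul_comm Mfh] at hw1
  rw [mul_comm Mgh] at hw2
  have cf := mul_eq_mul_of_eq_mul_cofactors (lift_ne_zero hf0 hlf.2) hufg hufh hw1
  have cg := mul_eq_mul_of_eq_mul_cofactors (lift_ne_zero hg0 hlg.2) hvfg hugh hw2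
  have ch := mul_eq_mul_of_eq_mul_cofactors (lift_ne_zero hh0 hlh.2) hvfh hvgh (hw1.symm.trans hw2)
  refine ⟨hfh, hgh, w1, w2, hw1, hw2, triangle_combination hfh hgh le_sup_left le_sup_left
    le_sup_right le_sup_right ?_ ?_ ?_ f g h⟩ <;> simp only [← map_mul, cf, cg, ch]

/-- **Triangular identity of S-polynomials over a PQR `R_q = K[x₁]/⟨q⟩`.**  For nonzero
non-units `f, g, h` with at most one of them in `R_q` and `lcm(lm f, lm g) ∈ ⟨lm h⟩`,
with `λ = σ_q(l_h/d)`, `d = gcd(lcm(l_f,l_g), l_h)` (the `l`'s being the canonical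
lifts of the leading coefficients), one has
`λ·S(f,g) = (λ·c(g|f)/c(h|f))·S(f,h) − (λ·c(f|g)/c(h|g))·S(g,h)`, the displayed
quotients of terms being exact. -/
theorem triangular_identity_PQR {σ K : Type*} [Field K] (mo : MonomialOrder σ)
    (q : Polynomial K) (hq : 0 < q.degree)
    (f g h : MvPolynomial σ (Polynomial K ⧸ Ideal.span {q}))
    (hf0 : f ≠ 0) (hfu : ¬ IsUnit f)
    (hg0 : g ≠ 0) (hgu : ¬ IsUnit g)
    (hh0 : h ≠ 0) (hhu : ¬ IsUnit h)
    (hatmost : ¬ (f ∈ Set.range (C : (Polynomial K ⧸ Ideal.span {q}) →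
        MvPolynomial σ (Polynomial K ⧸ Ideal.span {q})) ∧
        g ∈ Set.range (C : (Polynomial K ⧸ Ideal.span {q}) →
        MvPolynomial σ (Polynomial K ⧸ Ideal.span {q}))) ∧
      ¬ (f ∈ Set.range (C : (Polynomial K ⧸ Ideal.span {q}) →
        MvPolynomial σ (Polynomial K ⧸ Ideal.span {q})) ∧
        h ∈ Set.range (C : (Polynomial K ⧸ Ideal.span {q}) →
        MvPolynomial σ (Polynomial K ⧸ Ideal.span {q}))) ∧
      ¬ (g ∈ Set.range (C : (Polynomial K ⧸ Ideal.span {q}) →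
        MvPolynomial σ (Polynomial K ⧸ Ideal.span {q})) ∧
        h ∈ Set.range (C : (Polynomial K ⧸ Ideal.span {q}) →
        MvPolynomial σ (Polynomial K ⧸ Ideal.span {q}))))
    (hdvd : mdeg mo h ≤ mdeg mo f ⊔ mdeg mo g)
    (γfg γfh γgh : σ →₀ ℕ)
    (hγfg : γfg = mdeg mo f ⊔ mdeg mo g)
    (hγfh : γfh = mdeg mo f ⊔ mdeg mo h)
    (hγgh : γgh = mdeg mo g ⊔ mdeg mo h)
    (lf lg lh : Polynomial K)
    (hlf : lf.degree < q.degree ∧ Ideal.Quotient.mk (Ideal.span {q}) lf = lC mo f)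
    (hlg : lg.degree < q.degree ∧ Ideal.Quotient.mk (Ideal.span {q}) lg = lC mo g)
    (hlh : lh.degree < q.degree ∧ Ideal.Quotient.mk (Ideal.span {q}) lh = lC mo h)
    (Mfg Mfh Mgh ufg vfg ufh vfh ugh vgh d lam : Polynomial K)
    (hMfg : IsLcm Mfg lf lg) (hufg : Mfg = lf * ufg) (hvfg : Mfg = lg * vfg)
    (hMfh : IsLcm Mfh lf lh) (hufh : Mfh = lf * ufh) (hvfh : Mfh = lh * vfh)
    (hMgh : IsLcm Mgh lg lh) (hugh : Mgh = lg * ugh) (hvgh : Mgh = lh * vgh)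
    (hd : IsGcd d Mfg lh) (hlam : lh = d * lam) :
    γfh ≤ γfg ∧ γgh ≤ γfg ∧
    ∃ w1 w2 : Polynomial K,
      lam * Mfg = w1 * Mfh ∧ lam * Mfg = w2 * Mgh ∧
      C (Ideal.Quotient.mk (Ideal.span {q}) lam) *
          (C (Ideal.Quotient.mk (Ideal.span {q}) ufg) * monomial (γfg - mdeg mo f) 1 * f -
            C (Ideal.Quotient.mk (Ideal.span {q}) vfg) * monomial (γfg - mdeg mo g) 1 * g) =
        C (Ideal.Quotient.mk (Ideal.span {q}) w1) * monomial (γfg - γfh) 1 *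
            (C (Ideal.Quotient.mk (Ideal.span {q}) ufh) * monomial (γfh - mdeg mo f) 1 * f -
              C (Ideal.Quotient.mk (Ideal.span {q}) vfh) * monomial (γfh - mdeg mo h) 1 * h) -
          C (Ideal.Quotient.mk (Ideal.span {q}) w2) * monomial (γfg - γgh) 1 *
            (C (Ideal.Quotient.mk (Ideal.span {q}) ugh) * monomial (γgh - mdeg mo g) 1 * g -
              C (Ideal.Quotient.mk (Ideal.span {q}) vgh) * monomial (γgh - mdeg mo h) 1 * h) :=
  triangular_identity_PQR_general mo q f g h hf0 hg0 hh0 hdvd γfg γfh γgh hγfg hγfh hγgh lf lg lh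
    hlf hlg hlh Mfg Mfh Mgh ufg vfg ufh vfh ugh vgh d lam hufg hvfg hMfh hufh hvfh hMgh hugh hvgh hd
    hlam
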